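/- Under the hypotheses of the Prager–Synge theorem (u ∈ H¹₀(Ω) solves -Δu = f weakly, v ∈ H¹₀(Ω), p ∈ H(div;Ω) with div p + f = 0), the cross term vanishes: ∫_Ω (∇u - ∇v)·(∇u - p) dx = 0. -/

import Mathlib

/-!
Test both the weak formulation and Green's formula with `w = u - v`: the cross term splits
into `∫ ∇u·∇w - ∫ ∇w·p = ∫ f w + ∫ w div p`, which vanishes because `div p = -f`.
-/

open MeasureTheory RealInnerProductSpace

local notation "E2" => EuclideanSpace ℝ (Fin 2)

section

variable {α E : Type*} [MeasurableSpace α] {μ : Measure α}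
  [NormedAddCommGroup E] [InnerProductSpace ℝ E]

theorem MeasureTheory.MemLp.integrable_inner {f g : α → E} (hf : MemLp f 2 μ)
    (hg : MemLp g 2 μ) : Integrable (fun x => ⟪f x, g x⟫) μ :=
  (L2.integrable_inner (𝕜 := ℝ) (hf.toLp f) (hg.toLp g)).congr <| by
    filter_upwards [hf.coeFn_toLp, hg.coeFn_toLp] with x hfx hgx
    rw [hfx, hgx]

theorem integral_inner_sub_sub_eq {a b c : α → E} (ha : MemLp a 2 μ) (hb : MemLp b 2 μ)
    (hc : MemLp c 2 μ) :
    ∫ x, ⟪a x - b x, a x - c x⟫ ∂μ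
      = ∫ x, ⟪a x, a x - b x⟫ ∂μ - ∫ x, ⟪a x - b x, c x⟫ ∂μ := by
  have hab : MemLp (fun x => a x - b x) 2 μ := ha.sub hb
  rw [← integral_sub (ha.integrable_inner hab) (hab.integrable_inner hc)]
  congr 1 with x
  rw [inner_sub_right, real_inner_comm (a x)]

theorem integral_mul_eq_neg_integral_mul_of_add_eq_zero {w g f : α → ℝ}
    (hgf : ∀ᵐ x ∂μ, g x + f x = 0) :
    ∫ x, w x * g x ∂μ = -∫ x, f x * w x ∂μ := by
  rw [← integral_neg]
  refine integral_congr_ae ?_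
  filter_upwards [hgf] with x hx
  rw [eq_neg_of_add_eq_zero_left hx]
  ring

end

theorem prager_synge_cross_term_general
    (Ω : Set E2)
    (H10 : (E2 → ℝ) → Prop)
    (grad : (E2 → ℝ) → E2 → E2)
    (u v : E2 → ℝ) (p : E2 → E2) (f divp : E2 → ℝ)
    (hsub : H10 (fun x => u x - v x))
    (hgradsub : ∀ x, grad (fun y => u y - v y) x = grad u x - grad v x)
    (hweak : ∀ w, H10 w →
      ∫ x in Ω, ⟪grad u x, grad w x⟫ = ∫ x in Ω, f x * w x)
    (hGreen : ∀ w, H10 w →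
      ∫ x in Ω, ⟪grad w x, p x⟫ = -∫ x in Ω, w x * divp x)
    (hdivf : ∀ᵐ x ∂(volume.restrict Ω), divp x + f x = 0)
    (hgu : MemLp (grad u) 2 (volume.restrict Ω))
    (hgv : MemLp (grad v) 2 (volume.restrict Ω))
    (hp : MemLp p 2 (volume.restrict Ω)) :
    ∫ x in Ω, ⟪grad u x - grad v x, grad u x - p x⟫ = 0 := by
  rw [integral_inner_sub_sub_eq hgu hgv hp]
  simp only [← hgradsub]
  rw [hweak _ hsub, hGreen _ hsub, integral_mul_eq_neg_integral_mul_of_add_eq_zero hdivf]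
  ring

/-- Under the Prager–Synge hypotheses, the cross term vanishes:
∫_Ω (∇u - ∇v)·(∇u - p) dx = 0. -/
theorem prager_synge_cross_term
    (Ω : Set E2) (hΩmeas : MeasurableSet Ω) (hΩbdd : Bornology.IsBounded Ω)
    (H10 : (E2 → ℝ) → Prop)
    (grad : (E2 → ℝ) → E2 → E2)
    (u v : E2 → ℝ) (p : E2 → E2) (f divp : E2 → ℝ)
    (hf : MemLp f 2 (volume.restrict Ω))
    (hu : H10 u) (hv : H10 v)
    (hsub : H10 (fun x => u x - v x))
    (hgradsub : ∀ x, grad (fun y => u y - v y) x = grad u x - grad v x)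
    (hweak : ∀ w, H10 w →
      ∫ x in Ω, ⟪grad u x, grad w x⟫ = ∫ x in Ω, f x * w x)
    (hGreen : ∀ w, H10 w →
      ∫ x in Ω, ⟪grad w x, p x⟫ = -∫ x in Ω, w x * divp x)
    (hdivL2 : MemLp divp 2 (volume.restrict Ω))
    (hdivf : ∀ᵐ x ∂(volume.restrict Ω), divp x + f x = 0)
    (hgu : MemLp (grad u) 2 (volume.restrict Ω))
    (hgv : MemLp (grad v) 2 (volume.restrict Ω))
    (hp : MemLp p 2 (volume.restrict Ω)) :
    ∫ x in Ω, ⟪grad u x - grad v x, grad u x - p x⟫ = 0 :=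
  prager_synge_cross_term_general Ω H10 grad u v p f divp hsub hgradsub hweak hGreen hdivf hgu hgv
    hp
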